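/- arXiv:1505.04965 — 4 statements merged into one kernel-verified Lean document; each statement's English description precedes it below -/
import Mathlib

section
/- Let k > 0, x_K ∈ ℝ², let d₁, …, d_n be unit vectors in ℝ², and let α₁, …, α_n be nonnegative real numbers with Σ_{ℓ=1}^n α_ℓ = 1 and Σ_{ℓ=1}^n α_ℓ d_ℓ = 0 ∈ ℝ². Define b₁(x) = Σ_{ℓ=1}^n α_ℓ exp(i k d_ℓ·(x − x_K)). Then for every x ∈ ℝ², |b₁(x) − 1| ≤ (1/2) k² |x − x_K|², where |x − x_K| is the Euclidean norm. -/
/-!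
For real `t`, the second-order Taylor remainder `exp (i t) - 1 - i t` has norm at most `t² / 2`:
its derivative `i (exp (i s) - 1)` has norm at most `|s|`. Writing `b₁(x) - 1` as the
`α`-average of these remainders at `t_ℓ = k ⟪d_ℓ, x - x_K⟫` (the first-order terms cancel because
`Σ α_ℓ d_ℓ = 0`) and using `|t_ℓ| ≤ k ‖x - x_K‖` gives the bound.
-/

open Complex ComplexConjugate

namespace Complex

theorem hasDerivAt_exp_I_mul_sub_one_sub_I_mul (t : ℝ) :
    HasDerivAt (fun s : ℝ => exp (I * s) - 1 - I * s) (I * (exp (I * t) - 1)) t := by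
  have hlin : HasDerivAt (fun s : ℝ => I * (s : ℂ)) I t := by
    simpa using (hasDerivAt_id (t : ℂ)).comp_ofReal.const_mul I
  exact ((hlin.cexp.sub_const 1).sub hlin).congr_deriv (by ring)

theorem norm_exp_I_mul_sub_one_sub_I_mul_le_of_nonneg {t : ℝ} (ht : 0 ≤ t) :
    ‖exp (I * t) - 1 - I * t‖ ≤ t ^ 2 / 2 := by
  have hB : ∀ s : ℝ, HasDerivAt (fun s : ℝ => s ^ 2 / 2) s s := fun s => by
    simpa using (hasDerivAt_pow 2 s).div_const 2
  refine image_norm_le_of_norm_deriv_right_le_deriv_boundary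
    (fun s _ => (hasDerivAt_exp_I_mul_sub_one_sub_I_mul s).continuousAt.continuousWithinAt)
    (fun s _ => (hasDerivAt_exp_I_mul_sub_one_sub_I_mul s).hasDerivWithinAt)
    (a := 0) (by simp) hB (fun s hs => ?_) ⟨ht, le_rfl⟩
  rw [norm_mul, norm_I, one_mul]
  exact Real.norm_exp_I_mul_ofReal_sub_one_le.trans (Real.norm_of_nonneg hs.1).le

theorem norm_exp_I_mul_sub_one_sub_I_mul_le (t : ℝ) :
    ‖exp (I * t) - 1 - I * t‖ ≤ t ^ 2 / 2 := by
  rcases le_total 0 t with ht | ht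
  · exact norm_exp_I_mul_sub_one_sub_I_mul_le_of_nonneg ht
  · have hconj : exp (I * t) - 1 - I * t = conj (exp (I * ↑(-t)) - 1 - I * ↑(-t)) := by
      simp only [ofReal_neg, mul_neg, sub_neg_eq_add, map_add, map_sub, ← exp_conj, map_neg,
        map_mul, conj_I, conj_ofReal, neg_mul, neg_neg, map_one]
      ring
    rw [hconj, norm_conj, ← neg_sq]
    exact norm_exp_I_mul_sub_one_sub_I_mul_le_of_nonneg (neg_nonneg.mpr ht)

end Complex

theorem norm_sum_mul_exp_I_mul_sub_one_le {ι : Type*} [Fintype ι] (α t : ι → ℝ)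
    (hα : ∀ i, 0 ≤ α i) (hsum : ∑ i, α i = 1) (hmean : ∑ i, α i * t i = 0) :
    ‖∑ i, (α i : ℂ) * exp (I * t i) - 1‖ ≤ ∑ i, α i * (t i ^ 2 / 2) := by
  have hremainder : ∑ i, (α i : ℂ) * exp (I * t i) - 1
      = ∑ i, (α i : ℂ) * (exp (I * t i) - 1 - I * t i) := by
    have hsumC : ∑ i, (α i : ℂ) = 1 := by exact_mod_cast hsum
    have hmeanC : ∑ i, (α i : ℂ) * t i = 0 := by exact_mod_cast hmean
    simp only [mul_sub, Finset.sum_sub_distrib, mul_one, hsumC, mul_left_comm _ I,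
      ← Finset.mul_sum, hmeanC, mul_zero, sub_zero]
  rw [hremainder]
  refine (norm_sum_le _ _).trans (Finset.sum_le_sum fun i _ => ?_)
  rw [norm_mul, norm_real, Real.norm_of_nonneg (hα i)]
  exact mul_le_mul_of_nonneg_left (norm_exp_I_mul_sub_one_sub_I_mul_le (t i)) (hα i)

theorem planeWaveCombination_sub_one_bound_general
    (k : ℝ) (xK : EuclideanSpace ℝ (Fin 2)) (n : ℕ)
    (d : Fin n → EuclideanSpace ℝ (Fin 2)) (hd : ∀ ℓ, ‖d ℓ‖ = 1)
    (α : Fin n → ℝ) (hα : ∀ ℓ, 0 ≤ α ℓ) (hsum : ∑ ℓ, α ℓ = 1)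
    (hvec : ∑ ℓ, α ℓ • d ℓ = (0 : EuclideanSpace ℝ (Fin 2)))
    (b1 : EuclideanSpace ℝ (Fin 2) → ℂ)
    (hb1 : ∀ x, b1 x = ∑ ℓ, (α ℓ : ℂ) *
      Complex.exp (Complex.I * (k : ℂ) * ((inner ℝ (d ℓ) (x - xK) : ℝ) : ℂ))) :
    ∀ x, ‖b1 x - 1‖ ≤ (1 / 2) * k ^ 2 * ‖x - xK‖ ^ 2 := by
  intro x
  set t : Fin n → ℝ := fun ℓ => k * inner ℝ (d ℓ) (x - xK)
  have hmean : ∑ ℓ, α ℓ * t ℓ = 0 := by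
    have hinner : ∑ ℓ, α ℓ * t ℓ = k * inner ℝ (∑ ℓ, α ℓ • d ℓ) (x - xK) := by
      simp only [t, sum_inner, real_inner_smul_left, Finset.mul_sum]
      exact Finset.sum_congr rfl fun _ _ => mul_left_comm _ _ _
    rw [hinner, hvec, inner_zero_left, mul_zero]
  have hbound : ∀ ℓ, t ℓ ^ 2 / 2 ≤ (1 / 2) * k ^ 2 * ‖x - xK‖ ^ 2 := fun ℓ => by
    have hinner : |inner ℝ (d ℓ) (x - xK)| ≤ ‖x - xK‖ := by
      simpa [hd ℓ] using abs_real_inner_le_norm (d ℓ) (x - xK)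
    have := sq_le_sq' (abs_le.mp hinner).1 (abs_le.mp hinner).2
    simp only [t, mul_pow]
    nlinarith [sq_nonneg k]
  calc ‖b1 x - 1‖ = ‖∑ ℓ, (α ℓ : ℂ) * exp (I * t ℓ) - 1‖ := by
        simp only [hb1, t, ofReal_mul, mul_assoc]
    _ ≤ ∑ ℓ, α ℓ * (t ℓ ^ 2 / 2) := norm_sum_mul_exp_I_mul_sub_one_le α t hα hsum hmean
    _ ≤ ∑ ℓ, α ℓ * ((1 / 2) * k ^ 2 * ‖x - xK‖ ^ 2) :=
        Finset.sum_le_sum fun ℓ _ => mul_le_mul_of_nonneg_left (hbound ℓ) (hα ℓ)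
    _ = (1 / 2) * k ^ 2 * ‖x - xK‖ ^ 2 := by rw [← Finset.sum_mul, hsum, one_mul]

/-- Second-order Taylor bound: if `Σ αℓ = 1`, `Σ αℓ dℓ = 0` with `αℓ ≥ 0`, then
`|b₁(x) − 1| ≤ (1/2) k² |x − x_K|²`. -/
theorem planeWaveCombination_sub_one_bound
    (k : ℝ) (hk : 0 < k) (xK : EuclideanSpace ℝ (Fin 2)) (n : ℕ)
    (d : Fin n → EuclideanSpace ℝ (Fin 2)) (hd : ∀ ℓ, ‖d ℓ‖ = 1)
    (α : Fin n → ℝ) (hα : ∀ ℓ, 0 ≤ α ℓ) (hsum : ∑ ℓ, α ℓ = 1)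
    (hvec : ∑ ℓ, α ℓ • d ℓ = (0 : EuclideanSpace ℝ (Fin 2)))
    (b1 : EuclideanSpace ℝ (Fin 2) → ℂ)
    (hb1 : ∀ x, b1 x = ∑ ℓ, (α ℓ : ℂ) *
      Complex.exp (Complex.I * (k : ℂ) * ((inner ℝ (d ℓ) (x - xK) : ℝ) : ℂ))) :
    ∀ x, ‖b1 x - 1‖ ≤ (1 / 2) * k ^ 2 * ‖x - xK‖ ^ 2 :=
  planeWaveCombination_sub_one_bound_general k xK n d hd α hα hsum hvec b1 hb1
end

section
/- Let k > 0, x_K ∈ ℝ², h_K > 0, let d₁, …, d_n be unit vectors in ℝ², and let α₁, …, α_n be nonnegative real numbers with Σ_{ℓ=1}^n α_ℓ = 1 and Σ_{ℓ=1}^n α_ℓ d_ℓ = 0. Define b₁(x) = Σ_{ℓ=1}^n α_ℓ exp(i k d_ℓ·(x − x_K)). Then for every measurable set K ⊂ ℝ² of finite Lebesgue measure |K| contained in the closed ball of radius h_K centered at x_K, one has ‖1 − b₁‖_{L²(K)} ≤ (1/2) (h_K k)² |K|^{1/2}. -/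
/-!
Write `θ_ℓ = k d_ℓ · (x - x_K)`. The conditions `∑ α_ℓ = 1` and `∑ α_ℓ d_ℓ = 0` cancel the
Taylor terms of order zero and one, so `1 - b₁(x) = -∑ α_ℓ (e^{iθ_ℓ} - 1 - iθ_ℓ)`. Since
`|e^{iθ} - 1 - iθ| ≤ θ² / 2` and `|θ_ℓ| ≤ k h_K` on `K`, the convex combination is bounded
pointwise by `(h_K k)² / 2`, and integrating the square over `K` gives the claim.
-/

open MeasureTheory

open Complex ComplexConjugate in
theorem norm_exp_I_mul_ofReal_sub_one_sub_le (t : ℝ) :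
    ‖exp (I * t) - 1 - I * t‖ ≤ t ^ 2 / 2 := by
  wlog ht : 0 ≤ t generalizing t
  · have hconj : exp (I * ↑(-t)) - 1 - I * ↑(-t) = conj (exp (I * t) - 1 - I * t) := by
      simp [← exp_conj]
    have := this (-t) (by linarith)
    rwa [hconj, norm_conj, neg_sq] at this
  have hf : ∀ s : ℝ,
      HasDerivAt (fun s : ℝ => exp (I * s) - 1 - I * s) (I * (exp (I * s) - 1)) s := by
    intro s
    have := ((((hasDerivAt_id (s : ℂ)).const_mul I).cexp.sub_const 1).sub
      ((hasDerivAt_id (s : ℂ)).const_mul I)).comp_ofReal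
    simpa [mul_sub, mul_comm] using this
  -- The derivative `I (e^{is} - 1)` has norm at most `s`, so `s² / 2` fences the norm from above.
  refine image_norm_le_of_norm_deriv_right_le_deriv_boundary (a := 0) (b := t)
    (B := fun s => s ^ 2 / 2)
    (fun s _ => (hf s).continuousAt.continuousWithinAt) (fun s _ => (hf s).hasDerivWithinAt)
    (by simp) (fun s => by simpa using (hasDerivAt_pow 2 s).div_const 2) (fun s hs => ?_)
    ⟨ht, le_rfl⟩
  rw [norm_mul, norm_I, one_mul]
  exact Real.norm_exp_I_mul_ofReal_sub_one_le.trans_eq (Real.norm_of_nonneg hs.1)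

open Complex in
theorem norm_one_sub_sum_mul_exp_I_mul_le {ι : Type*} [Fintype ι] {α θ : ι → ℝ}
    (hα : ∀ i, 0 ≤ α i) (hsum : ∑ i, α i = 1) (hmean : ∑ i, α i * θ i = 0) {M : ℝ}
    (hθ : ∀ i, |θ i| ≤ M) :
    ‖1 - ∑ i, (α i : ℂ) * exp (I * θ i)‖ ≤ M ^ 2 / 2 := by
  have hsumC : ∑ i, (α i : ℂ) = 1 := by exact_mod_cast hsum
  have hmeanC : ∑ i, (α i : ℂ) * θ i = 0 := by exact_mod_cast hmean
  have hsplit : 1 - ∑ i, (α i : ℂ) * exp (I * θ i)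
      = -∑ i, (α i : ℂ) * (exp (I * θ i) - 1 - I * θ i) := by
    simp only [mul_sub, Finset.sum_sub_distrib, mul_one, hsumC, mul_left_comm _ I,
      ← Finset.mul_sum, hmeanC, mul_zero, sub_zero, neg_sub]
  calc ‖1 - ∑ i, (α i : ℂ) * exp (I * θ i)‖
      ≤ ∑ i, α i * (θ i ^ 2 / 2) := by
        rw [hsplit, norm_neg]
        refine (norm_sum_le _ _).trans (Finset.sum_le_sum fun i _ => ?_)
        rw [norm_mul, norm_real, Real.norm_of_nonneg (hα i)]
        exact mul_le_mul_of_nonneg_left (norm_exp_I_mul_ofReal_sub_one_sub_le _) (hα i)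
    _ ≤ ∑ i, α i * (M ^ 2 / 2) := by
        refine Finset.sum_le_sum fun i _ => mul_le_mul_of_nonneg_left ?_ (hα i)
        exact div_le_div_of_nonneg_right (sq_le_sq.mpr ((hθ i).trans (le_abs_self M))) two_pos.le
    _ = M ^ 2 / 2 := by rw [← Finset.sum_mul, hsum, one_mul]

open Complex in
theorem norm_one_sub_sum_mul_exp_inner_le {E ι : Type*} [NormedAddCommGroup E]
    [InnerProductSpace ℝ E] [Fintype ι] {α : ι → ℝ} {d : ι → E} (hα : ∀ i, 0 ≤ α i)
    (hsum : ∑ i, α i = 1) (hvec : ∑ i, α i • d i = 0) (hd : ∀ i, ‖d i‖ ≤ 1) (k : ℝ)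
    {y : E} {h : ℝ} (hy : ‖y‖ ≤ h) :
    ‖1 - ∑ i, (α i : ℂ) * exp (I * k * (inner ℝ (d i) y : ℝ))‖ ≤ (h * k) ^ 2 / 2 := by
  have hmean : ∑ i, α i * (k * inner ℝ (d i) y) = 0 := by
    simp_rw [mul_left_comm _ k, ← Finset.mul_sum, ← real_inner_smul_left, ← sum_inner, hvec,
      inner_zero_left, mul_zero]
  have hθ : ∀ i, |k * inner ℝ (d i) y| ≤ |k| * h := fun i => by
    rw [abs_mul]
    gcongr
    exact (abs_real_inner_le_norm _ _).trans
      ((mul_le_of_le_one_left (norm_nonneg _) (hd i)).trans hy)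
  have := norm_one_sub_sum_mul_exp_I_mul_le hα hsum hmean hθ
  push_cast at this
  simpa only [mul_assoc, mul_pow, sq_abs, mul_comm h] using this

theorem sqrt_setIntegral_norm_sq_le {X E : Type*} [MeasurableSpace X] [NormedAddCommGroup E]
    {μ : Measure X} {s : Set X} {f : X → E} {C : ℝ} (hs : μ s < ⊤) (hC0 : 0 ≤ C)
    (hC : ∀ x ∈ s, ‖f x‖ ≤ C) :
    √(∫ x in s, ‖f x‖ ^ 2 ∂μ) ≤ C * √(μ.real s) := by
  have hsq : ∫ x in s, ‖f x‖ ^ 2 ∂μ ≤ C ^ 2 * μ.real s :=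
    (Real.le_norm_self _).trans <| norm_setIntegral_le_of_norm_le_const hs fun x hx => by
      rw [norm_pow, norm_norm]
      exact pow_le_pow_left₀ (norm_nonneg _) (hC x hx) 2
  calc √(∫ x in s, ‖f x‖ ^ 2 ∂μ) ≤ √(C ^ 2 * μ.real s) := Real.sqrt_le_sqrt hsq
    _ = C * √(μ.real s) := by rw [Real.sqrt_mul (sq_nonneg C), Real.sqrt_sq hC0]

theorem planeWaveCombination_one_sub_L2_bound_general
    (k : ℝ) (xK : EuclideanSpace ℝ (Fin 2)) (hK : ℝ)
    (n : ℕ) (d : Fin n → EuclideanSpace ℝ (Fin 2)) (hd : ∀ ℓ, ‖d ℓ‖ = 1)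
    (α : Fin n → ℝ) (hα : ∀ ℓ, 0 ≤ α ℓ) (hsum : ∑ ℓ, α ℓ = 1)
    (hvec : ∑ ℓ, α ℓ • d ℓ = (0 : EuclideanSpace ℝ (Fin 2)))
    (b1 : EuclideanSpace ℝ (Fin 2) → ℂ)
    (hb1 : ∀ x, b1 x = ∑ ℓ, (α ℓ : ℂ) *
      Complex.exp (Complex.I * (k : ℂ) * ((inner ℝ (d ℓ) (x - xK) : ℝ) : ℂ))) :
    ∀ K : Set (EuclideanSpace ℝ (Fin 2)), MeasurableSet K → volume K < ⊤ →
      K ⊆ Metric.closedBall xK hK →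
      Real.sqrt (∫ x in K, ‖1 - b1 x‖ ^ 2) ≤
        (1 / 2) * (hK * k) ^ 2 * Real.sqrt ((volume K).toReal) := by
  intro K _ hKfin hKsub
  refine sqrt_setIntegral_norm_sq_le hKfin (by positivity) fun x hx => ?_
  rw [hb1, one_div_mul_eq_div]
  exact norm_one_sub_sum_mul_exp_inner_le hα hsum hvec (fun ℓ => (hd ℓ).le) k
    (mem_closedBall_iff_norm.mp (hKsub hx))

/-- `L²(K)` bound for `1 − b₁` on a set `K` contained in the closed ball of
radius `h_K` around `x_K`: `‖1 − b₁‖_{L²(K)} ≤ (1/2)(h_K k)² |K|^{1/2}`. -/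
theorem planeWaveCombination_one_sub_L2_bound
    (k : ℝ) (hk : 0 < k) (xK : EuclideanSpace ℝ (Fin 2)) (hK : ℝ) (hhK : 0 < hK)
    (n : ℕ) (d : Fin n → EuclideanSpace ℝ (Fin 2)) (hd : ∀ ℓ, ‖d ℓ‖ = 1)
    (α : Fin n → ℝ) (hα : ∀ ℓ, 0 ≤ α ℓ) (hsum : ∑ ℓ, α ℓ = 1)
    (hvec : ∑ ℓ, α ℓ • d ℓ = (0 : EuclideanSpace ℝ (Fin 2)))
    (b1 : EuclideanSpace ℝ (Fin 2) → ℂ)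
    (hb1 : ∀ x, b1 x = ∑ ℓ, (α ℓ : ℂ) *
      Complex.exp (Complex.I * (k : ℂ) * ((inner ℝ (d ℓ) (x - xK) : ℝ) : ℂ))) :
    ∀ K : Set (EuclideanSpace ℝ (Fin 2)), MeasurableSet K → volume K < ⊤ →
      K ⊆ Metric.closedBall xK hK →
      Real.sqrt (∫ x in K, ‖1 - b1 x‖ ^ 2) ≤
        (1 / 2) * (hK * k) ^ 2 * Real.sqrt ((volume K).toReal) :=
  planeWaveCombination_one_sub_L2_bound_general k xK hK n d hd α hα hsum hvec b1 hb1
end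

section
/- Let k > 0, x_K ∈ ℝ², let d₁, …, d_n be unit vectors in ℝ², and let α₁, …, α_n be nonnegative real numbers with Σ_{ℓ=1}^n α_ℓ = 1 and Σ_{ℓ=1}^n α_ℓ d_ℓ = 0 ∈ ℝ². Define b₁(x) = Σ_{ℓ=1}^n α_ℓ exp(i k d_ℓ·(x − x_K)). Then for every x ∈ ℝ², the gradient of b₁ satisfies |∇b₁(x)| ≤ k² |x − x_K|, where |∇b₁(x)| denotes the Euclidean norm of the (complex) gradient vector Σ_ℓ α_ℓ i k d_ℓ exp(i k d_ℓ·(x − x_K)). -/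
open Complex Finset RealInnerProductSpace

lemma EuclideanSpace.norm_toLp_ofReal {m : Type*} [Fintype m] (v : EuclideanSpace ℝ m) :
    ‖WithLp.toLp 2 (fun j => (v j : ℂ))‖ = ‖v‖ := by
  simp [EuclideanSpace.norm_eq]

lemma EuclideanSpace.norm_toLp_sum_mul_ofReal_le {ι m : Type*} [Fintype ι] [Fintype m]
    (c : ι → ℂ) (v : ι → EuclideanSpace ℝ m) :
    ‖WithLp.toLp 2 (fun j => ∑ ℓ, c ℓ * (v ℓ j : ℂ))‖ ≤ ∑ ℓ, ‖c ℓ‖ * ‖v ℓ‖ := by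
  have hsum : WithLp.toLp 2 (fun j => ∑ ℓ, c ℓ * (v ℓ j : ℂ))
      = ∑ ℓ, c ℓ • WithLp.toLp 2 (fun j => (v ℓ j : ℂ)) := by
    ext j
    simp
  rw [hsum]
  refine (norm_sum_le _ _).trans (sum_le_sum fun ℓ _ => ?_)
  rw [norm_smul, norm_toLp_ofReal]

lemma norm_exp_I_mul_inner_sub_one_le {E : Type*} [NormedAddCommGroup E]
    [InnerProductSpace ℝ E] (k : ℝ) (d y : E) :
    ‖exp (I * k * (⟪d, y⟫ : ℂ)) - 1‖ ≤ |k| * (‖d‖ * ‖y‖) := by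
  calc ‖exp (I * k * (⟪d, y⟫ : ℂ)) - 1‖ = ‖exp (I * ↑(k * ⟪d, y⟫)) - 1‖ := by
        push_cast; ring_nf
    _ ≤ ‖k * ⟪d, y⟫‖ := Real.norm_exp_I_mul_ofReal_sub_one_le
    _ ≤ |k| * (‖d‖ * ‖y‖) := by
        rw [norm_mul, Real.norm_eq_abs]
        gcongr
        exact norm_inner_le_norm d y

theorem planeWaveCombination_grad_pointwise_bound_general
    (k : ℝ) (xK : EuclideanSpace ℝ (Fin 2)) (n : ℕ)
    (d : Fin n → EuclideanSpace ℝ (Fin 2)) (hd : ∀ ℓ, ‖d ℓ‖ = 1)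
    (α : Fin n → ℝ) (hα : ∀ ℓ, 0 ≤ α ℓ) (hsum : ∑ ℓ, α ℓ = 1)
    (hvec : ∑ ℓ, α ℓ • d ℓ = (0 : EuclideanSpace ℝ (Fin 2)))
    (g : EuclideanSpace ℝ (Fin 2) → EuclideanSpace ℂ (Fin 2))
    (hg : ∀ x j, g x j = ∑ ℓ, (α ℓ : ℂ) * Complex.I * (k : ℂ) * ((d ℓ j : ℝ) : ℂ) *
      Complex.exp (Complex.I * (k : ℂ) * ((inner ℝ (d ℓ) (x - xK) : ℝ) : ℂ))) :
    ∀ x, ‖g x‖ ≤ k ^ 2 * ‖x - xK‖ := by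
  intro x
  set c : Fin n → ℂ := fun ℓ => α ℓ * I * k * (exp (I * k * (⟪d ℓ, x - xK⟫ : ℂ)) - 1)
  -- Since `∑ αℓ dℓ = 0`, each plane wave may be replaced by its deviation from `1`.
  have hgx : g x = WithLp.toLp 2 (fun j => ∑ ℓ, c ℓ * (d ℓ j : ℂ)) := by
    ext j
    have hvecj : ∑ ℓ, (α ℓ : ℂ) * (d ℓ j : ℂ) = 0 := by
      simpa using congrArg (fun v : EuclideanSpace ℝ (Fin 2) => (v j : ℂ)) hvec
    calc g x j = ∑ ℓ, c ℓ * (d ℓ j : ℂ) + I * k * ∑ ℓ, (α ℓ : ℂ) * (d ℓ j : ℂ) := by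
          simp only [hg, c, mul_sum, ← sum_add_distrib]
          exact sum_congr rfl fun ℓ _ => by ring
      _ = _ := by simp [hvecj]
  have hc : ∀ ℓ, ‖c ℓ‖ * ‖d ℓ‖ ≤ α ℓ * (k ^ 2 * ‖x - xK‖) := fun ℓ => by
    have hwave := norm_exp_I_mul_inner_sub_one_le k (d ℓ) (x - xK)
    rw [hd ℓ, one_mul] at hwave
    calc ‖c ℓ‖ * ‖d ℓ‖ = α ℓ * |k| * ‖exp (I * k * (⟪d ℓ, x - xK⟫ : ℂ)) - 1‖ := by
          simp [c, hd ℓ, abs_of_nonneg (hα ℓ)]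
      _ ≤ α ℓ * |k| * (|k| * ‖x - xK‖) :=
          mul_le_mul_of_nonneg_left hwave (mul_nonneg (hα ℓ) (abs_nonneg k))
      _ = α ℓ * (k ^ 2 * ‖x - xK‖) := by rw [← sq_abs k]; ring
  calc ‖g x‖ ≤ ∑ ℓ, ‖c ℓ‖ * ‖d ℓ‖ := hgx ▸ EuclideanSpace.norm_toLp_sum_mul_ofReal_le c d
    _ ≤ ∑ ℓ, α ℓ * (k ^ 2 * ‖x - xK‖) := sum_le_sum fun ℓ _ => hc ℓ
    _ = k ^ 2 * ‖x - xK‖ := by rw [← sum_mul, hsum, one_mul]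

/-- Pointwise bound on the gradient of the plane-wave combination `b₁`:
`|∇b₁(x)| ≤ k² |x − x_K|`, where
`∇b₁(x) = Σℓ αℓ i k dℓ exp(i k dℓ·(x − x_K))`. -/
theorem planeWaveCombination_grad_pointwise_bound
    (k : ℝ) (hk : 0 < k) (xK : EuclideanSpace ℝ (Fin 2)) (n : ℕ)
    (d : Fin n → EuclideanSpace ℝ (Fin 2)) (hd : ∀ ℓ, ‖d ℓ‖ = 1)
    (α : Fin n → ℝ) (hα : ∀ ℓ, 0 ≤ α ℓ) (hsum : ∑ ℓ, α ℓ = 1)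
    (hvec : ∑ ℓ, α ℓ • d ℓ = (0 : EuclideanSpace ℝ (Fin 2)))
    (g : EuclideanSpace ℝ (Fin 2) → EuclideanSpace ℂ (Fin 2))
    (hg : ∀ x j, g x j = ∑ ℓ, (α ℓ : ℂ) * Complex.I * (k : ℂ) * ((d ℓ j : ℝ) : ℂ) *
      Complex.exp (Complex.I * (k : ℂ) * ((inner ℝ (d ℓ) (x - xK) : ℝ) : ℂ))) :
    ∀ x, ‖g x‖ ≤ k ^ 2 * ‖x - xK‖ :=
  planeWaveCombination_grad_pointwise_bound_general k xK n d hd α hα hsum hvec g hg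
end

section
/- Let v ∈ V*_p(K) and suppose w ∈ V*_p(K) satisfies ∫_K ∇w·conj(∇ξ) dV + k² ∫_K w·conj(ξ) dV = a^K(v, ξ) for all ξ ∈ V*_p(K). Then ‖∇(v − w)‖²_{L²(K)} = k² ‖v‖²_{L²(K)} − k² ‖w‖²_{L²(K)}; in particular ‖∇(v − w)‖_{L²(K)} ≤ k ‖v‖_{L²(K)}. -/
open MeasureTheory

noncomputable section

/-- Points of the plane `ℝ²`. -/
abbrev Pt := EuclideanSpace ℝ (Fin 2)

/-- The plane wave `pw(x) = exp(i k d·(x − x_K))`. -/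
def pw (k : ℝ) (xK d : Pt) : Pt → ℂ :=
  fun x => Complex.exp (Complex.I * (k : ℂ) * ((inner ℝ d (x - xK) : ℝ) : ℂ))

/-- The local plane wave space `V*_p(K)`: the complex span of the plane waves
with directions `d ℓ`, `ℓ = 1,…,p`, centered at `x_K`. -/
def Vstar (k : ℝ) (xK : Pt) {p : ℕ} (d : Fin p → Pt) : Submodule ℂ (Pt → ℂ) :=
  Submodule.span ℂ (Set.range fun ℓ => pw k xK (d ℓ))

/-- The gradient (componentwise Fréchet derivative) of a complex-valued
function on `ℝ²`. -/
def grad2 (u : Pt → ℂ) (x : Pt) : Fin 2 → ℂ :=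
  fun j => fderiv ℝ u x (EuclideanSpace.single j 1)

/-- The local Helmholtz bilinear form
`a^K(u,v) = ∫_K ∇u·conj(∇v) dV − k² ∫_K u conj(v) dV`. -/
def aK (K : Set Pt) (k : ℝ) (u v : Pt → ℂ) : ℂ :=
  (∫ x in K, ∑ j : Fin 2, grad2 u x j * (starRingEnd ℂ) (grad2 v x j)) -
    (k ^ 2 : ℂ) * ∫ x in K, u x * (starRingEnd ℂ) (v x)

/-- `‖∇u‖²_{L²(K)}`. -/
def gradSq (K : Set Pt) (u : Pt → ℂ) : ℝ :=
  ∫ x in K, ∑ j : Fin 2, ‖grad2 u x j‖ ^ 2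

/-- `‖u‖²_{L²(K)}`. -/
def l2Sq (K : Set Pt) (u : Pt → ℂ) : ℝ :=
  ∫ x in K, ‖u x‖ ^ 2

/-- The weighted norm `‖u‖_{1,k,K} = (‖∇u‖²_{L²(K)} + k²‖u‖²_{L²(K)})^{1/2}`. -/
def norm1k (K : Set Pt) (k : ℝ) (u : Pt → ℂ) : ℝ :=
  Real.sqrt (gradSq K u + k ^ 2 * l2Sq K u)

end

/-!
Testing the auxiliary problem with `ξ = v - w` gives `‖∇(v - w)‖² = k² (v + w, v - w)_{L²(K)}`.
The real part of the right-hand side is `k² (‖v‖² - ‖w‖²)`, because `(w, v) - (v, w)` is purely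
imaginary. Plane waves are bounded with bounded gradients, which makes every integral involved
finite on a set of finite measure, so the forms can be expanded sesquilinearly.
-/

open MeasureTheory ComplexConjugate

noncomputable section

def boundedC1 (E : Type*) [NormedAddCommGroup E] [NormedSpace ℝ E] : Submodule ℂ (E → ℂ) where
  carrier := {u | ContDiff ℝ 1 u ∧ (∃ C, ∀ x, ‖u x‖ ≤ C) ∧ ∃ C, ∀ x, ‖fderiv ℝ u x‖ ≤ C}
  zero_mem' := ⟨contDiff_const, ⟨0, by simp⟩, ⟨0, by simp⟩⟩
  add_mem' := by
    rintro u v ⟨hu, ⟨Bu, hBu⟩, ⟨Du, hDu⟩⟩ ⟨hv, ⟨Bv, hBv⟩, ⟨Dv, hDv⟩⟩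
    refine ⟨hu.add hv, ⟨Bu + Bv, fun x => ?_⟩, ⟨Du + Dv, fun x => ?_⟩⟩
    · exact (norm_add_le _ _).trans (add_le_add (hBu x) (hBv x))
    · rw [fderiv_add (hu.differentiable one_ne_zero x) (hv.differentiable one_ne_zero x)]
      exact (norm_add_le _ _).trans (add_le_add (hDu x) (hDv x))
  smul_mem' := by
    rintro c u ⟨hu, ⟨B, hB⟩, ⟨D, hD⟩⟩
    refine ⟨hu.const_smul c, ⟨‖c‖ * B, fun x => ?_⟩, ⟨‖c‖ * D, fun x => ?_⟩⟩
    · rw [Pi.smul_apply, norm_smul]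
      exact mul_le_mul_of_nonneg_left (hB x) (norm_nonneg c)
    · rw [fderiv_const_smul (hu.differentiable one_ne_zero x)]
      exact (ContinuousLinearMap.opNorm_smul_le c _).trans
        (mul_le_mul_of_nonneg_left (hD x) (norm_nonneg c))

section BoundedC1

variable {E : Type*} [NormedAddCommGroup E]

lemma integrableOn_mul_conj_of_bounded [MeasurableSpace E] [OpensMeasurableSpace E]
    {μ : Measure E} {K : Set E} (hK : μ K ≠ ⊤) {f g : E → ℂ}
    (hf : Continuous f) (hg : Continuous g) {Cf Cg : ℝ}
    (hCf : ∀ x, ‖f x‖ ≤ Cf) (hCg : ∀ x, ‖g x‖ ≤ Cg) :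
    IntegrableOn (fun x => f x * conj (g x)) K μ := by
  refine Measure.integrableOn_of_bounded hK
    (hf.mul (Complex.continuous_conj.comp hg)).aestronglyMeasurable
    (M := Cf * Cg) (Filter.Eventually.of_forall fun x => ?_)
  rw [norm_mul, RCLike.norm_conj]
  exact mul_le_mul (hCf x) (hCg x) (norm_nonneg _) ((norm_nonneg _).trans (hCf x))

namespace boundedC1

variable [NormedSpace ℝ E] [MeasurableSpace E] [OpensMeasurableSpace E]
  {μ : Measure E} {K : Set E} {u v : E → ℂ}

lemma integrableOn_mul_conj (hK : μ K ≠ ⊤) (hu : u ∈ boundedC1 E) (hv : v ∈ boundedC1 E) :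
    IntegrableOn (fun x => u x * conj (v x)) K μ :=
  integrableOn_mul_conj_of_bounded hK hu.1.continuous hv.1.continuous
    hu.2.1.choose_spec hv.2.1.choose_spec

lemma integrableOn_fderiv_mul_conj (hK : μ K ≠ ⊤) (hu : u ∈ boundedC1 E)
    (hv : v ∈ boundedC1 E) (y : E) :
    IntegrableOn (fun x => fderiv ℝ u x y * conj (fderiv ℝ v x y)) K μ := by
  obtain ⟨hu, -, ⟨Du, hDu⟩⟩ := hu
  obtain ⟨hv, -, ⟨Dv, hDv⟩⟩ := hv
  exact integrableOn_mul_conj_of_bounded hK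
    ((hu.continuous_fderiv one_ne_zero).clm_apply continuous_const)
    ((hv.continuous_fderiv one_ne_zero).clm_apply continuous_const)
    (fun x => (ContinuousLinearMap.le_opNorm _ y).trans
      (mul_le_mul_of_nonneg_right (hDu x) (norm_nonneg y)))
    (fun x => (ContinuousLinearMap.le_opNorm _ y).trans
      (mul_le_mul_of_nonneg_right (hDv x) (norm_nonneg y)))

end boundedC1

end BoundedC1

lemma norm_pw (k : ℝ) (xK d x : Pt) : ‖pw k xK d x‖ = 1 := by
  simp [pw, Complex.norm_exp]

lemma hasFDerivAt_pw (k : ℝ) (xK d x : Pt) :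
    HasFDerivAt (pw k xK d)
      ((Complex.I * k * pw k xK d x) • Complex.ofRealCLM.comp (innerSL ℝ d)) x := by
  have hphase : HasFDerivAt (fun y : Pt => ((inner ℝ d (y - xK) : ℝ) : ℂ))
      (Complex.ofRealCLM.comp (innerSL ℝ d)) x :=
    Complex.ofRealCLM.hasFDerivAt.comp x
      ((innerSL ℝ d).hasFDerivAt.comp x ((hasFDerivAt_id x).sub_const xK))
  refine (hphase.const_mul (Complex.I * (k : ℂ))).cexp.congr_fderiv ?_
  rw [smul_smul, mul_comm]
  rfl

lemma pw_mem_boundedC1 (k : ℝ) (xK d : Pt) : pw k xK d ∈ boundedC1 Pt := by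
  refine ⟨?_, ⟨1, fun x => (norm_pw k xK d x).le⟩,
    ⟨‖Complex.I * k‖ * ‖Complex.ofRealCLM.comp (innerSL ℝ d)‖, fun x => ?_⟩⟩
  · exact (contDiff_const.mul (Complex.ofRealCLM.contDiff.comp
      ((innerSL ℝ d).contDiff.comp (contDiff_id.sub contDiff_const)))).cexp
  · rw [(hasFDerivAt_pw k xK d x).fderiv, norm_smul, norm_mul _ (pw k xK d x), norm_pw, mul_one]

lemma Vstar_le_boundedC1 (k : ℝ) (xK : Pt) {p : ℕ} (d : Fin p → Pt) :
    Vstar k xK d ≤ boundedC1 Pt :=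
  Submodule.span_le.2 <| Set.range_subset_iff.2 fun ℓ => pw_mem_boundedC1 k xK (d ℓ)

def gradInner (K : Set Pt) (u ξ : Pt → ℂ) : ℂ :=
  ∫ x in K, ∑ j : Fin 2, grad2 u x j * conj (grad2 ξ x j)

def l2Inner (K : Set Pt) (u ξ : Pt → ℂ) : ℂ :=
  ∫ x in K, u x * conj (ξ x)

section Sesquilinear

variable {K : Set Pt} {u v ξ : Pt → ℂ}

lemma aK_eq_gradInner_sub (k : ℝ) (u ξ : Pt → ℂ) :
    aK K k u ξ = gradInner K u ξ - (k : ℂ) ^ 2 * l2Inner K u ξ :=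
  rfl

lemma l2Inner_self : l2Inner K u u = l2Sq K u := by
  rw [l2Inner, l2Sq, ← integral_complex_ofReal]
  simp_rw [Complex.mul_conj, Complex.normSq_eq_norm_sq]

lemma gradInner_self : gradInner K u u = gradSq K u := by
  rw [gradInner, gradSq, ← integral_complex_ofReal]
  simp_rw [Complex.mul_conj, Complex.normSq_eq_norm_sq, Complex.ofReal_sum]

lemma conj_l2Inner : conj (l2Inner K u v) = l2Inner K v u := by
  rw [l2Inner, l2Inner, ← integral_conj]
  simp_rw [map_mul, Complex.conj_conj, mul_comm]

lemma l2Inner_sub_right (hv : IntegrableOn (fun x => u x * conj (v x)) K)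
    (hξ : IntegrableOn (fun x => u x * conj (ξ x)) K) :
    l2Inner K u (v - ξ) = l2Inner K u v - l2Inner K u ξ := by
  rw [l2Inner, l2Inner, l2Inner, ← integral_sub hv hξ]
  simp_rw [Pi.sub_apply, map_sub, mul_sub]

lemma grad2_sub {x : Pt} (hu : DifferentiableAt ℝ u x) (hv : DifferentiableAt ℝ v x) :
    grad2 (u - v) x = grad2 u x - grad2 v x := by
  ext j
  simp [grad2, fderiv_sub hu hv]

lemma gradInner_sub_left (hu : Differentiable ℝ u) (hv : Differentiable ℝ v)
    (huξ : IntegrableOn (fun x => ∑ j : Fin 2, grad2 u x j * conj (grad2 ξ x j)) K)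
    (hvξ : IntegrableOn (fun x => ∑ j : Fin 2, grad2 v x j * conj (grad2 ξ x j)) K) :
    gradInner K (u - v) ξ = gradInner K u ξ - gradInner K v ξ := by
  rw [gradInner, gradInner, gradInner, ← integral_sub huξ hvξ]
  simp_rw [grad2_sub (hu _) (hv _), Pi.sub_apply, sub_mul, Finset.sum_sub_distrib]

lemma integrableOn_grad2_mul_conj (hK : volume K ≠ ⊤) (hu : u ∈ boundedC1 Pt)
    (hv : v ∈ boundedC1 Pt) :
    IntegrableOn (fun x => ∑ j : Fin 2, grad2 u x j * conj (grad2 v x j)) K :=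
  integrable_finsetSum _ fun _ _ => boundedC1.integrableOn_fderiv_mul_conj hK hu hv _

end Sesquilinear

theorem gradSq_sub_eq_of_auxiliary {K : Set Pt} (hK : volume K ≠ ⊤) {k : ℝ}
    {v w : Pt → ℂ} (hv : v ∈ boundedC1 Pt) (hw : w ∈ boundedC1 Pt)
    (h : gradInner K w (v - w) + (k : ℂ) ^ 2 * l2Inner K w (v - w) = aK K k v (v - w)) :
    gradSq K (v - w) = k ^ 2 * l2Sq K v - k ^ 2 * l2Sq K w := by
  have he : v - w ∈ boundedC1 Pt := sub_mem hv hw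
  have hG : gradInner K (v - w) (v - w) = gradInner K v (v - w) - gradInner K w (v - w) :=
    gradInner_sub_left (hv.1.differentiable one_ne_zero) (hw.1.differentiable one_ne_zero)
      (integrableOn_grad2_mul_conj hK hv he) (integrableOn_grad2_mul_conj hK hw he)
  have hMv : l2Inner K v (v - w) = l2Sq K v - conj (l2Inner K w v) := by
    rw [l2Inner_sub_right (boundedC1.integrableOn_mul_conj hK hv hv)
      (boundedC1.integrableOn_mul_conj hK hv hw), l2Inner_self, conj_l2Inner]
  have hMw : l2Inner K w (v - w) = l2Inner K w v - l2Sq K w := by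
    rw [l2Inner_sub_right (boundedC1.integrableOn_mul_conj hK hw hv)
      (boundedC1.integrableOn_mul_conj hK hw hw), l2Inner_self]
  have hcomplex : (gradSq K (v - w) : ℂ) =
      ((k ^ 2 * l2Sq K v - k ^ 2 * l2Sq K w : ℝ) : ℂ)
        + ((k ^ 2 : ℝ) : ℂ) * (l2Inner K w v - conj (l2Inner K w v)) := by
    rw [← gradInner_self, hG]
    rw [aK_eq_gradInner_sub, hMv, hMw] at h
    push_cast
    linear_combination -h
  rw [Complex.sub_conj] at hcomplex
  simpa [-Complex.ofReal_pow] using congrArg Complex.re hcomplex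

theorem auxiliary_problem_energy_identity_general
    (K : Set Pt) (hKfin : volume K < ⊤)
    (k : ℝ) (hk : 0 < k) (xK : Pt)
    (p : ℕ) (d : Fin p → Pt)
    (v w : Pt → ℂ) (hv : v ∈ Vstar k xK d) (hw : w ∈ Vstar k xK d)
    (hproj : ∀ ξ ∈ Vstar k xK d,
      (∫ x in K, ∑ j : Fin 2, grad2 w x j * (starRingEnd ℂ) (grad2 ξ x j)) +
        (k ^ 2 : ℂ) * ∫ x in K, w x * (starRingEnd ℂ) (ξ x) = aK K k v ξ) :
    gradSq K (fun x => v x - w x) = k ^ 2 * l2Sq K v - k ^ 2 * l2Sq K w ∧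
      Real.sqrt (gradSq K (fun x => v x - w x)) ≤ k * Real.sqrt (l2Sq K v) := by
  have hV := Vstar_le_boundedC1 k xK d
  have henergy : gradSq K (v - w) = k ^ 2 * l2Sq K v - k ^ 2 * l2Sq K w :=
    gradSq_sub_eq_of_auxiliary hKfin.ne (hV hv) (hV hw) (hproj _ (sub_mem hv hw))
  have hw0 : 0 ≤ l2Sq K w := integral_nonneg fun _ => sq_nonneg _
  refine ⟨henergy, ?_⟩
  calc Real.sqrt (gradSq K (v - w))
      ≤ Real.sqrt (k ^ 2 * l2Sq K v) :=
        Real.sqrt_le_sqrt (henergy ▸ sub_le_self _ (mul_nonneg (sq_nonneg k) hw0))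
    _ = k * Real.sqrt (l2Sq K v) := by rw [Real.sqrt_mul (sq_nonneg k), Real.sqrt_sq hk.le]

/-- If `w ∈ V*_p(K)` solves the auxiliary coercive problem
`(∇w, ∇ξ)_K + k²(w, ξ)_K = a^K(v, ξ)` for all `ξ ∈ V*_p(K)`, then
`‖∇(v − w)‖²_{L²(K)} = k²‖v‖²_{L²(K)} − k²‖w‖²_{L²(K)}`, and in particular
`‖∇(v − w)‖_{L²(K)} ≤ k ‖v‖_{L²(K)}`. -/
theorem auxiliary_problem_energy_identity
    (K : Set Pt) (hKopen : IsOpen K) (hKpos : 0 < volume K) (hKfin : volume K < ⊤)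
    (k : ℝ) (hk : 0 < k) (xK : Pt)
    (p : ℕ) (d : Fin p → Pt) (hd : ∀ ℓ, ‖d ℓ‖ = 1)
    (v w : Pt → ℂ) (hv : v ∈ Vstar k xK d) (hw : w ∈ Vstar k xK d)
    (hproj : ∀ ξ ∈ Vstar k xK d,
      (∫ x in K, ∑ j : Fin 2, grad2 w x j * (starRingEnd ℂ) (grad2 ξ x j)) +
        (k ^ 2 : ℂ) * ∫ x in K, w x * (starRingEnd ℂ) (ξ x) = aK K k v ξ) :
    gradSq K (fun x => v x - w x) = k ^ 2 * l2Sq K v - k ^ 2 * l2Sq K w ∧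
      Real.sqrt (gradSq K (fun x => v x - w x)) ≤ k * Real.sqrt (l2Sq K v) :=
  auxiliary_problem_energy_identity_general K hKfin k hk xK p d v w hv hw hproj
end
end
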